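/- arXiv:2603.24824 — 3 statements merged into one kernel-verified Lean document; each statement's English description precedes it below -/
import Mathlib

section
/- Let ρ = (a^b) with a, b ≥ 2 and ab = n. Then ρ has exactly two neighbors in the partition graph G_n, namely α(ρ) = (a+1, a^{b-2}, a-1) and β(ρ) = (a^{b-1}, a-1, 1). In particular deg(ρ) = 2. -/
/-- A partition of `n`: a multiset of positive integers summing to `n`. -/
def IsPartition (n : ℕ) (s : Multiset ℕ) : Prop :=
  s.sum = n ∧ ∀ x ∈ s, 0 < x

/-- `t` is obtained from `s` by a single elementary unit transfer: one unit is
moved from a part `x` (the part is deleted if it becomes `0`) onto a part `y`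
(`y = 0` encodes creation of a new part of size `1`). -/
def UnitTransfer (s t : Multiset ℕ) : Prop :=
  ∃ (u : Multiset ℕ) (x y : ℕ), 0 < x ∧
    s = u + Multiset.filter (fun z => 0 < z) {x, y} ∧
    t = u + Multiset.filter (fun z => 0 < z) {x - 1, y + 1}

/-- Adjacency in the partition graph `G_n`. -/
def Adj (n : ℕ) (s t : Multiset ℕ) : Prop :=
  IsPartition n s ∧ IsPartition n t ∧ s ≠ t ∧ (UnitTransfer s t ∨ UnitTransfer t s)

/-- The rectangular partition `(a^b)`: `b` copies of `a`. -/
def rect (a b : ℕ) : Multiset ℕ := Multiset.replicate b a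

/-- `α(ρ) = (a+1, a^{b-2}, a-1)`. -/
def alphaP (a b : ℕ) : Multiset ℕ := (a + 1) ::ₘ (a - 1) ::ₘ Multiset.replicate (b - 2) a

/-- `β(ρ) = (a^{b-1}, a-1, 1)`. -/
def betaP (a b : ℕ) : Multiset ℕ := (a - 1) ::ₘ 1 ::ₘ Multiset.replicate (b - 1) a

/-- `γ₁(ρ) = (a+1, a^{b-3}, (a-1)^2, 1)`. -/
def gamma1P (a b : ℕ) : Multiset ℕ :=
  (a + 1) ::ₘ 1 ::ₘ (Multiset.replicate 2 (a - 1) + Multiset.replicate (b - 3) a)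

/-- `γ₂(ρ) = (a+1, a^{b-2}, a-2, 1)`. -/
def gamma2P (a b : ℕ) : Multiset ℕ :=
  (a + 1) ::ₘ (a - 2) ::ₘ 1 ::ₘ Multiset.replicate (b - 2) a

/-- The set of nontrivial rectangular partitions of `n`. -/
def RectStar (n : ℕ) : Set (Multiset ℕ) :=
  {s | ∃ a b, 2 ≤ a ∧ 2 ≤ b ∧ a * b = n ∧ s = rect a b}

/-- The conjugate partition: its `k`-th part is the number of parts `≥ k`. -/
def conjP (s : Multiset ℕ) : Multiset ℕ :=
  Multiset.filter (fun m => 0 < m)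
    ((Multiset.range s.sum).map (fun k => (Multiset.filter (fun x => k + 1 ≤ x) s).card))

lemma add_pair (u : Multiset ℕ) (x y : ℕ) : u + ({x, y} : Multiset ℕ) = x ::ₘ y ::ₘ u := by
  rw [add_comm]; simp [Multiset.insert_eq_cons, Multiset.cons_add]

lemma add_single (u : Multiset ℕ) (x : ℕ) : u + ({x} : Multiset ℕ) = x ::ₘ u := by
  rw [add_comm, Multiset.singleton_add]

lemma filter_pair (x y : ℕ) (hx : 0 < x) (hy : 0 < y) :
    Multiset.filter (fun z => 0 < z) ({x, y} : Multiset ℕ) = {x, y} := by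
  rw [Multiset.filter_eq_self]; intro z hz; simp at hz; rcases hz with rfl|rfl <;> assumption

lemma filter_pair_r0 (x : ℕ) (hx : 0 < x) :
    Multiset.filter (fun z => 0 < z) ({x, 0} : Multiset ℕ) = {x} := by
  simp [Multiset.insert_eq_cons, Multiset.filter_cons, hx, Multiset.filter_singleton]

lemma filter_pair_l0 (y : ℕ) (hy : 0 < y) :
    Multiset.filter (fun z => 0 < z) ({0, y} : Multiset ℕ) = {y} := by
  simp [Multiset.insert_eq_cons, Multiset.filter_cons, hy, Multiset.filter_singleton]

theorem stmt_3 (n a b : ℕ) (ha : 2 ≤ a) (hb : 2 ≤ b) (hn : a * b = n) :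
    {t : Multiset ℕ | Adj n (rect a b) t} = ({alphaP a b, betaP a b} : Set (Multiset ℕ)) ∧
    alphaP a b ≠ betaP a b := by
  obtain ⟨a', rfl⟩ : ∃ a', a = a' + 2 := ⟨a - 2, by omega⟩
  obtain ⟨b', rfl⟩ : ∃ b', b = b' + 2 := ⟨b - 2, by omega⟩
  subst hn
  set A := a' + 2 with hA
  -- normalized forms
  have halpha : alphaP A (b' + 2) = (A + 1) ::ₘ (a' + 1) ::ₘ Multiset.replicate b' A := by
    simp [alphaP, hA]
  have hbeta : betaP A (b' + 2) = (a' + 1) ::ₘ 1 ::ₘ Multiset.replicate (b' + 1) A := by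
    simp [betaP, hA]
  have hrect2 : rect A (b' + 2) = A ::ₘ A ::ₘ Multiset.replicate b' A := by
    simp [rect, Multiset.replicate_succ]
  have hrect1 : rect A (b' + 2) = A ::ₘ Multiset.replicate (b' + 1) A := by
    simp [rect, Multiset.replicate_succ]
  have hApos : 0 < A := by omega
  have hmemrect : ∀ x ∈ rect A (b' + 2), x = A := fun x hx =>
    Multiset.eq_of_mem_replicate hx
  have hsumrect : (rect A (b' + 2)).sum = A * (b' + 2) := by
    simp [rect, Multiset.sum_replicate]; ring
  have hPrect : IsPartition (A * (b' + 2)) (rect A (b' + 2)) := by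
    refine ⟨hsumrect, fun x hx => ?_⟩; rw [hmemrect x hx]; omega
  have hPalpha : IsPartition (A * (b' + 2)) (alphaP A (b' + 2)) := by
    rw [halpha]
    constructor
    · simp [Multiset.sum_replicate, hA]; ring
    · intro x hx
      simp [Multiset.mem_replicate, hA] at hx
      omega
  have hPbeta : IsPartition (A * (b' + 2)) (betaP A (b' + 2)) := by
    rw [hbeta]
    constructor
    · simp [Multiset.sum_replicate, hA]; ring
    · intro x hx
      simp [Multiset.mem_replicate, hA] at hx
      omega
  have hAnotmem : (A + 1) ∉ rect A (b' + 2) := by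
    intro h; have := hmemrect _ h; omega
  have h1notmem : (1 : ℕ) ∉ rect A (b' + 2) := by
    intro h; have := hmemrect _ h; omega
  have hne_alpha : rect A (b' + 2) ≠ alphaP A (b' + 2) := by
    intro h
    apply hAnotmem
    rw [h, halpha]; simp
  have hne_beta : rect A (b' + 2) ≠ betaP A (b' + 2) := by
    intro h
    apply h1notmem
    rw [h, hbeta]; simp
  have hab : alphaP A (b' + 2) ≠ betaP A (b' + 2) := by
    intro h
    have hm : (A + 1) ∈ betaP A (b' + 2) := by rw [← h, halpha]; simp
    rw [hbeta] at hm
    simp [Multiset.mem_replicate, hA] at hm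
  refine ⟨?_, hab⟩
  ext t
  simp only [Set.mem_setOf_eq, Set.mem_insert_iff, Set.mem_singleton_iff]
  constructor
  · rintro ⟨-, ht, hne, h | h⟩
    · obtain ⟨u, x, y, hx, h1, h2⟩ := h
      have hxA : x = A := by
        apply hmemrect
        rw [h1]
        refine Multiset.mem_add.mpr (Or.inr ?_)
        rw [Multiset.mem_filter]
        exact ⟨by simp, hx⟩
      subst hxA
      rcases Nat.eq_zero_or_pos y with rfl | hy
      · -- beta case
        rw [filter_pair_r0 A hApos, add_single, hrect1] at h1
        have hu : u = Multiset.replicate (b' + 1) A := (Multiset.cons_inj_right A).mp h1.symm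
        right
        rw [h2, hu, hbeta]
        rw [show A - 1 = a' + 1 by omega, filter_pair _ _ (by omega) (by omega), add_pair]
      · have hyA : y = A := by
          apply hmemrect
          rw [h1]
          refine Multiset.mem_add.mpr (Or.inr ?_)
          rw [Multiset.mem_filter]
          exact ⟨by simp, hy⟩
        subst hyA
        rw [filter_pair _ _ hApos hApos, add_pair, hrect2] at h1
        have hu : u = Multiset.replicate b' A := by
          have := (Multiset.cons_inj_right A).mp h1.symm
          exact (Multiset.cons_inj_right A).mp this
        left
        rw [h2, hu, halpha]
        rw [show A - 1 = a' + 1 by omega, filter_pair _ _ (by omega) (by omega), add_pair]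
        rw [Multiset.cons_swap]
    · obtain ⟨u, x, y, hx, h1, h2⟩ := h
      have hyA : y + 1 = A := by
        apply hmemrect
        rw [h2]
        refine Multiset.mem_add.mpr (Or.inr ?_)
        rw [Multiset.mem_filter]
        exact ⟨by simp, by omega⟩
      rcases Nat.lt_or_ge x 2 with hx2 | hx2
      · -- x = 1, beta case
        have hx1 : x = 1 := by omega
        subst hx1
        rw [show (1:ℕ) - 1 = 0 from rfl, filter_pair_l0 _ (by omega), hyA, add_single, hrect1]
          at h2
        have hu : u = Multiset.replicate (b' + 1) A := (Multiset.cons_inj_right A).mp h2.symm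
        right
        rw [h1, hu, hbeta]
        rw [show y = a' + 1 by omega, filter_pair _ _ (by omega) (by omega), add_pair,
          Multiset.cons_swap]
      · -- x = A + 1, alpha case
        have hxA : x - 1 = A := by
          apply hmemrect
          rw [h2]
          refine Multiset.mem_add.mpr (Or.inr ?_)
          rw [Multiset.mem_filter]
          exact ⟨by simp, by omega⟩
        rw [hxA, hyA, filter_pair _ _ hApos hApos, add_pair, hrect2] at h2
        have hu : u = Multiset.replicate b' A := by
          have := (Multiset.cons_inj_right A).mp h2.symm
          exact (Multiset.cons_inj_right A).mp this
        left
        rw [h1, hu, halpha]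
        rw [show x = A + 1 by omega, show y = a' + 1 by omega,
          filter_pair _ _ (by omega) (by omega), add_pair]
  · rintro (rfl | rfl)
    · refine ⟨hPrect, hPalpha, hne_alpha, Or.inl ?_⟩
      refine ⟨Multiset.replicate b' A, A, A, hApos, ?_, ?_⟩
      · rw [filter_pair _ _ hApos hApos, add_pair, hrect2]
      · rw [show A - 1 = a' + 1 by omega, filter_pair _ _ (by omega) (by omega), add_pair,
          halpha, Multiset.cons_swap]
    · refine ⟨hPrect, hPbeta, hne_beta, Or.inl ?_⟩
      refine ⟨Multiset.replicate (b' + 1) A, A, 0, hApos, ?_, ?_⟩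
      · rw [filter_pair_r0 A hApos, add_single, hrect1]
      · rw [show A - 1 = a' + 1 by omega, filter_pair _ _ (by omega) (by omega), add_pair,
          hbeta]
end

section
/- Let ρ = (a^b) with a, b ≥ 2 and ab = n. Then the unique maximal clique of the partition graph G_n containing ρ is the triangle {ρ, α(ρ), β(ρ)}, where α(ρ) = (a+1, a^{b-2}, a-1) and β(ρ) = (a^{b-1}, a-1, 1). In particular every clique containing ρ is a subset of this triangle. -/
/-- A clique in the partition graph `G_n`: a set of partitions of `n` that are
pairwise adjacent. -/
def IsClique (n : ℕ) (C : Set (Multiset ℕ)) : Prop :=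
  (∀ s ∈ C, IsPartition n s) ∧ C.Pairwise (Adj n)

lemma st5_filt2 (x y : ℕ) (hx : 0 < x) (hy : 0 < y) :
    Multiset.filter (fun z => 0 < z) {x, y} = {x, y} := by
  simp [Multiset.insert_eq_cons, Multiset.filter_cons_of_pos, Multiset.filter_singleton, hx, hy]

lemma st5_filt1r (x : ℕ) (hx : 0 < x) :
    Multiset.filter (fun z => 0 < z) {x, 0} = {x} := by
  simp [Multiset.insert_eq_cons, Multiset.filter_cons_of_pos, Multiset.filter_singleton, hx]

lemma st5_filt1l (x : ℕ) (hx : 0 < x) :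
    Multiset.filter (fun z => 0 < z) {0, x} = {x} := by
  simp [Multiset.insert_eq_cons, Multiset.filter_cons_of_pos, Multiset.filter_singleton, hx]

lemma st5_addpair (u : Multiset ℕ) (x y : ℕ) : u + {x, y} = x ::ₘ y ::ₘ u := by
  simp only [Multiset.insert_eq_cons, Multiset.add_cons]
  rw [add_comm, Multiset.singleton_add]

lemma st5_addone (u : Multiset ℕ) (x : ℕ) : u + {x} = x ::ₘ u := by
  rw [add_comm, Multiset.singleton_add]

lemma st5_urep (s u : Multiset ℕ) (b a : ℕ) (h : Multiset.replicate b a = u + s) :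
    u = Multiset.replicate u.card a := by
  rw [Multiset.eq_replicate_card]
  intro z hz
  exact Multiset.eq_of_mem_replicate (h ▸ Multiset.mem_add.mpr (Or.inl hz))

/-- Any neighbor of the rectangle is `α` or `β`. -/
lemma st5_neighbor (a b : ℕ) (ha : 2 ≤ a) (hb : 2 ≤ b) (t : Multiset ℕ)
    (h : UnitTransfer (rect a b) t ∨ UnitTransfer t (rect a b)) :
    t = alphaP a b ∨ t = betaP a b := by
  have ha0 : 0 < a := by omega
  have ham : 0 < a - 1 := by omega
  rcases h with ⟨u, x, y, hx, hs, ht⟩ | ⟨u, x, y, hx, ht, hs⟩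
  · -- transfer from rect to t
    have hall : ∀ z ∈ u + Multiset.filter (fun z => 0 < z) {x, y}, z = a := by
      rw [← hs]; exact fun z hz => Multiset.eq_of_mem_replicate hz
    have hxa : x = a := hall x (Multiset.mem_add.mpr (Or.inr (by
      simp [Multiset.mem_filter, Multiset.insert_eq_cons, hx])))
    rw [hxa] at hs ht
    rcases Nat.eq_zero_or_pos y with hy | hy
    · subst hy
      rw [st5_filt1r a ha0] at hs
      have hu : u = Multiset.replicate u.card a := st5_urep _ _ _ _ hs
      have hc : b = u.card + 1 := by
        have := congrArg Multiset.card hs; simpa [rect] using this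
      right
      rw [ht, st5_filt2 _ _ ham (by omega), st5_addpair, hu, betaP]
      rw [show u.card = b - 1 by omega]
    · have hya : y = a := hall y (Multiset.mem_add.mpr (Or.inr (by
        simp [Multiset.mem_filter, Multiset.insert_eq_cons, hy])))
      rw [hya] at hs ht
      rw [st5_filt2 a a ha0 ha0] at hs
      have hu : u = Multiset.replicate u.card a := st5_urep _ _ _ _ hs
      have hc : b = u.card + 2 := by
        have := congrArg Multiset.card hs
        simpa [rect, Multiset.insert_eq_cons] using this
      left
      rw [ht, st5_filt2 _ _ ham (by omega), st5_addpair, hu, alphaP]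
      rw [show u.card = b - 2 by omega, Multiset.cons_swap]
  · -- transfer from t to rect
    have hall : ∀ z ∈ u + Multiset.filter (fun z => 0 < z) {x - 1, y + 1}, z = a := by
      rw [← hs]; exact fun z hz => Multiset.eq_of_mem_replicate hz
    have hya : y + 1 = a := hall (y + 1) (Multiset.mem_add.mpr (Or.inr (by
      simp [Multiset.mem_filter, Multiset.insert_eq_cons])))
    rcases Nat.lt_or_ge x 2 with hx2 | hx2
    · have hx1 : x = 1 := by omega
      subst hx1
      rw [show (1 : ℕ) - 1 = 0 from rfl, st5_filt1l _ (by omega)] at hs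
      have hu : u = Multiset.replicate u.card a := st5_urep _ _ _ _ hs
      have hc : b = u.card + 1 := by
        have := congrArg Multiset.card hs; simpa [rect] using this
      right
      have hy0 : 0 < y := by omega
      rw [ht, st5_filt2 _ _ one_pos hy0, st5_addpair, hu, betaP]
      rw [show u.card = b - 1 by omega, show y = a - 1 by omega, Multiset.cons_swap]
    · have hxm : x - 1 = a := hall (x - 1) (Multiset.mem_add.mpr (Or.inr (by
        simp [Multiset.mem_filter, Multiset.insert_eq_cons, show 0 < x - 1 by omega])))
      rw [hxm, hya, st5_filt2 a a ha0 ha0] at hs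
      have hu : u = Multiset.replicate u.card a := st5_urep _ _ _ _ hs
      have hc : b = u.card + 2 := by
        have := congrArg Multiset.card hs
        simpa [rect, Multiset.insert_eq_cons] using this
      left
      rw [ht, st5_filt2 _ _ hx (by omega), st5_addpair, hu, alphaP]
      rw [show u.card = b - 2 by omega, show x = a + 1 by omega, show y = a - 1 by omega]

theorem stmt_5 (n a b : ℕ) (ha : 2 ≤ a) (hb : 2 ≤ b) (hn : a * b = n) :
    IsClique n ({rect a b, alphaP a b, betaP a b} : Set (Multiset ℕ)) ∧
    (∀ C : Set (Multiset ℕ), IsClique n C → rect a b ∈ C →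
      C ⊆ ({rect a b, alphaP a b, betaP a b} : Set (Multiset ℕ))) := by
  have ha0 : 0 < a := by omega
  have ham : 0 < a - 1 := by omega
  have hb2 : b - 2 + 2 = b := by omega
  have hb1 : b - 1 + 1 = b := by omega
  -- replicate decompositions
  have e1 : Multiset.replicate b a = a ::ₘ a ::ₘ Multiset.replicate (b - 2) a := by
    conv_lhs => rw [← hb2]
    simp [Multiset.replicate_succ]
  have e2 : Multiset.replicate b a = a ::ₘ Multiset.replicate (b - 1) a := by
    conv_lhs => rw [← hb1]
    simp [Multiset.replicate_succ]
  have e3 : Multiset.replicate (b - 1) a = a ::ₘ Multiset.replicate (b - 2) a := by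
    conv_lhs => rw [show b - 1 = b - 2 + 1 by omega]
    simp [Multiset.replicate_succ]
  -- partitions
  have hρ : IsPartition n (rect a b) := by
    constructor
    · rw [rect, Multiset.sum_replicate, smul_eq_mul, mul_comm]; exact hn
    · intro x hx
      rw [rect] at hx
      rw [Multiset.eq_of_mem_replicate hx]; omega
  have hα : IsPartition n (alphaP a b) := by
    constructor
    · rw [alphaP]
      simp only [Multiset.sum_cons, Multiset.sum_replicate, smul_eq_mul]
      have h1 : a * b = a * (b - 2) + a * 2 := by rw [← Nat.mul_add, hb2]
      have h2 : (b - 2) * a = a * (b - 2) := Nat.mul_comm _ _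
      omega
    · intro x hx
      simp only [alphaP, Multiset.mem_cons, Multiset.mem_replicate] at hx
      rcases hx with rfl | rfl | ⟨-, rfl⟩ <;> omega
  have hβ : IsPartition n (betaP a b) := by
    constructor
    · rw [betaP]
      simp only [Multiset.sum_cons, Multiset.sum_replicate, smul_eq_mul]
      have h1 : a * b = a * (b - 1) + a * 1 := by rw [← Nat.mul_add, hb1]
      have h2 : (b - 1) * a = a * (b - 1) := Nat.mul_comm _ _
      omega
    · intro x hx
      simp only [betaP, Multiset.mem_cons, Multiset.mem_replicate] at hx
      rcases hx with rfl | rfl | ⟨-, rfl⟩ <;> omega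
  -- unit transfers
  have ut1 : UnitTransfer (rect a b) (alphaP a b) := by
    refine ⟨Multiset.replicate (b - 2) a, a, a, ha0, ?_, ?_⟩
    · rw [st5_filt2 a a ha0 ha0, st5_addpair, rect]; exact e1
    · rw [st5_filt2 _ _ ham (by omega), st5_addpair, alphaP, Multiset.cons_swap]
  have ut2 : UnitTransfer (rect a b) (betaP a b) := by
    refine ⟨Multiset.replicate (b - 1) a, a, 0, ha0, ?_, ?_⟩
    · rw [st5_filt1r a ha0, st5_addone, rect]; exact e2
    · rw [st5_filt2 _ _ ham (by omega), st5_addpair, betaP]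
  have ut3 : UnitTransfer (alphaP a b) (betaP a b) := by
    refine ⟨(a - 1) ::ₘ Multiset.replicate (b - 2) a, a + 1, 0, by omega, ?_, ?_⟩
    · rw [st5_filt1r _ (by omega), st5_addone, alphaP]
    · rw [st5_filt2 _ _ (by omega) (by omega), st5_addpair, betaP, e3]
      show (a - 1) ::ₘ 1 ::ₘ a ::ₘ Multiset.replicate (b - 2) a
          = a ::ₘ 1 ::ₘ (a - 1) ::ₘ Multiset.replicate (b - 2) a
      simp only [← Multiset.singleton_add]
      abel
  -- distinctness
  have d1 : rect a b ≠ alphaP a b := by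
    intro h
    have h1 : (a + 1) ∈ rect a b := by rw [h, alphaP]; exact Multiset.mem_cons_self _ _
    rw [rect] at h1
    have := Multiset.eq_of_mem_replicate h1
    omega
  have d2 : rect a b ≠ betaP a b := by
    intro h
    have h1 : (1 : ℕ) ∈ rect a b := by
      rw [h, betaP]
      exact Multiset.mem_cons_of_mem (Multiset.mem_cons_self _ _)
    rw [rect] at h1
    have := Multiset.eq_of_mem_replicate h1
    omega
  have d3 : alphaP a b ≠ betaP a b := by
    intro h
    have h1 : (a + 1) ∈ betaP a b := by rw [← h, alphaP]; exact Multiset.mem_cons_self _ _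
    simp only [betaP, Multiset.mem_cons, Multiset.mem_replicate] at h1
    omega
  have adj1 : Adj n (rect a b) (alphaP a b) := ⟨hρ, hα, d1, Or.inl ut1⟩
  have adj2 : Adj n (rect a b) (betaP a b) := ⟨hρ, hβ, d2, Or.inl ut2⟩
  have adj3 : Adj n (alphaP a b) (betaP a b) := ⟨hα, hβ, d3, Or.inl ut3⟩
  have symm : ∀ s t, Adj n s t → Adj n t s := fun s t ⟨h1, h2, h3, h4⟩ =>
    ⟨h2, h1, h3.symm, h4.symm⟩
  constructor
  · constructor
    · intro s hs
      simp only [Set.mem_insert_iff, Set.mem_singleton_iff] at hs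
      rcases hs with rfl | rfl | rfl <;> assumption
    · intro s hs t ht hne
      simp only [Set.mem_insert_iff, Set.mem_singleton_iff] at hs ht
      rcases hs with rfl | rfl | rfl <;> rcases ht with rfl | rfl | rfl <;>
        first
          | exact absurd rfl hne
          | exact adj1
          | exact adj2
          | exact adj3
          | exact symm _ _ adj1
          | exact symm _ _ adj2
          | exact symm _ _ adj3
  · intro C hC hρC t htC
    simp only [Set.mem_insert_iff, Set.mem_singleton_iff]
    by_cases hteq : t = rect a b
    · exact Or.inl hteq
    · have hadj : Adj n (rect a b) t := hC.2 hρC htC (fun h => hteq h.symm)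
      rcases st5_neighbor a b ha hb t hadj.2.2.2 with h | h
      · exact Or.inr (Or.inl h)
      · exact Or.inr (Or.inr h)
end

section
/- Let ρ = (a^b) with a ≥ 3, b ≥ 3 and ab = n. Define α = (a+1, a^{b-2}, a-1), β = (a^{b-1}, a-1, 1), γ₁ = (a+1, a^{b-3}, (a-1)^2, 1), and γ₂ = (a+1, a^{b-2}, a-2, 1). Then {α, β, γ₁, γ₂} is a 4-clique in the partition graph G_n: all six pairs among these four partitions are adjacent. -/
set_option maxHeartbeats 2000000 in
theorem stmt_8 (n a b : ℕ) (ha : 3 ≤ a) (hb : 3 ≤ b) (hn : a * b = n) :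
    Adj n (alphaP a b) (betaP a b) ∧
    Adj n (alphaP a b) (gamma1P a b) ∧
    Adj n (alphaP a b) (gamma2P a b) ∧
    Adj n (betaP a b) (gamma1P a b) ∧
    Adj n (betaP a b) (gamma2P a b) ∧
    Adj n (gamma1P a b) (gamma2P a b) := by
  obtain ⟨a', rfl⟩ : ∃ a', a = a' + 3 := ⟨a - 3, by omega⟩
  obtain ⟨b', rfl⟩ : ∃ b', b = b' + 3 := ⟨b - 3, by omega⟩
  subst hn
  have e1 : a' + 3 - 1 = a' + 2 := by omega
  have e2 : a' + 3 - 2 = a' + 1 := by omega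
  have e3 : b' + 3 - 2 = b' + 1 := by omega
  have e4 : b' + 3 - 1 = b' + 2 := by omega
  have e5 : b' + 3 - 3 = b' := by omega
  have e6 : a' + 4 - 1 = a' + 3 := by omega
  have e7 : a' + 2 - 1 = a' + 1 := by omega
  have hα : IsPartition ((a'+3)*(b'+3)) (alphaP (a'+3) (b'+3)) := by
    constructor
    · simp [alphaP, e1, e3, Multiset.sum_cons, Multiset.sum_replicate, smul_eq_mul]; ring
    · intro x hx
      simp [alphaP, e1, e3, Multiset.mem_cons, Multiset.mem_replicate] at hx
      omega
  have hβ : IsPartition ((a'+3)*(b'+3)) (betaP (a'+3) (b'+3)) := by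
    constructor
    · simp [betaP, e1, e4, Multiset.sum_cons, Multiset.sum_replicate, smul_eq_mul]; ring
    · intro x hx
      simp [betaP, e1, e4, Multiset.mem_cons, Multiset.mem_replicate] at hx
      omega
  have hγ1 : IsPartition ((a'+3)*(b'+3)) (gamma1P (a'+3) (b'+3)) := by
    constructor
    · simp [gamma1P, e1, e5, Multiset.sum_cons, Multiset.sum_add, Multiset.sum_replicate, smul_eq_mul]; ring
    · intro x hx
      simp [gamma1P, e1, e5, Multiset.mem_cons, Multiset.mem_add, Multiset.mem_replicate] at hx
      omega
  have hγ2 : IsPartition ((a'+3)*(b'+3)) (gamma2P (a'+3) (b'+3)) := by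
    constructor
    · simp [gamma2P, e2, e3, Multiset.sum_cons, Multiset.sum_replicate, smul_eq_mul]; ring
    · intro x hx
      simp [gamma2P, e2, e3, Multiset.mem_cons, Multiset.mem_replicate] at hx
      omega
  have t1 : UnitTransfer (alphaP (a'+3) (b'+3)) (betaP (a'+3) (b'+3)) := by
    refine ⟨(a'+2) ::ₘ Multiset.replicate (b'+1) (a'+3), a'+4, 0, by omega, ?_, ?_⟩ <;>
    · rw [Multiset.ext]
      intro z
      simp only [alphaP, betaP, gamma1P, gamma2P, e1, e2, e3, e4, e5, e6, e7,
        Multiset.insert_eq_cons, Multiset.count_cons, Multiset.count_add,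
        Multiset.count_replicate, Multiset.count_filter, Multiset.count_zero,
        Multiset.count_singleton, Multiset.filter_zero]
      split_ifs <;> omega
  have t2 : UnitTransfer (alphaP (a'+3) (b'+3)) (gamma1P (a'+3) (b'+3)) := by
    refine ⟨(a'+4) ::ₘ (a'+2) ::ₘ Multiset.replicate b' (a'+3), a'+3, 0, by omega, ?_, ?_⟩ <;>
    · rw [Multiset.ext]
      intro z
      simp only [alphaP, betaP, gamma1P, gamma2P, e1, e2, e3, e4, e5, e6, e7,
        Multiset.insert_eq_cons, Multiset.count_cons, Multiset.count_add,
        Multiset.count_replicate, Multiset.count_filter, Multiset.count_zero,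
        Multiset.count_singleton, Multiset.filter_zero]
      split_ifs <;> omega
  have t3 : UnitTransfer (alphaP (a'+3) (b'+3)) (gamma2P (a'+3) (b'+3)) := by
    refine ⟨(a'+4) ::ₘ Multiset.replicate (b'+1) (a'+3), a'+2, 0, by omega, ?_, ?_⟩ <;>
    · rw [Multiset.ext]
      intro z
      simp only [alphaP, betaP, gamma1P, gamma2P, e1, e2, e3, e4, e5, e6, e7,
        Multiset.insert_eq_cons, Multiset.count_cons, Multiset.count_add,
        Multiset.count_replicate, Multiset.count_filter, Multiset.count_zero,
        Multiset.count_singleton, Multiset.filter_zero]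
      split_ifs <;> omega
  have t4 : UnitTransfer (betaP (a'+3) (b'+3)) (gamma1P (a'+3) (b'+3)) := by
    refine ⟨(a'+2) ::ₘ 1 ::ₘ Multiset.replicate b' (a'+3), a'+3, a'+3, by omega, ?_, ?_⟩ <;>
    · rw [Multiset.ext]
      intro z
      simp only [alphaP, betaP, gamma1P, gamma2P, e1, e2, e3, e4, e5, e6, e7,
        Multiset.insert_eq_cons, Multiset.count_cons, Multiset.count_add,
        Multiset.count_replicate, Multiset.count_filter, Multiset.count_zero,
        Multiset.count_singleton, Multiset.filter_zero]
      split_ifs <;> omega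
  have t5 : UnitTransfer (betaP (a'+3) (b'+3)) (gamma2P (a'+3) (b'+3)) := by
    refine ⟨1 ::ₘ Multiset.replicate (b'+1) (a'+3), a'+2, a'+3, by omega, ?_, ?_⟩ <;>
    · rw [Multiset.ext]
      intro z
      simp only [alphaP, betaP, gamma1P, gamma2P, e1, e2, e3, e4, e5, e6, e7,
        Multiset.insert_eq_cons, Multiset.count_cons, Multiset.count_add,
        Multiset.count_replicate, Multiset.count_filter, Multiset.count_zero,
        Multiset.count_singleton, Multiset.filter_zero]
      split_ifs <;> omega
  have t6 : UnitTransfer (gamma1P (a'+3) (b'+3)) (gamma2P (a'+3) (b'+3)) := by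
    refine ⟨(a'+4) ::ₘ 1 ::ₘ Multiset.replicate b' (a'+3), a'+2, a'+2, by omega, ?_, ?_⟩ <;>
    · rw [Multiset.ext]
      intro z
      simp only [alphaP, betaP, gamma1P, gamma2P, e1, e2, e3, e4, e5, e6, e7,
        Multiset.insert_eq_cons, Multiset.count_cons, Multiset.count_add,
        Multiset.count_replicate, Multiset.count_filter, Multiset.count_zero,
        Multiset.count_singleton, Multiset.filter_zero]
      split_ifs <;> omega
  refine ⟨⟨hα, hβ, ?_, Or.inl t1⟩, ⟨hα, hγ1, ?_, Or.inl t2⟩, ⟨hα, hγ2, ?_, Or.inl t3⟩,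
    ⟨hβ, hγ1, ?_, Or.inl t4⟩, ⟨hβ, hγ2, ?_, Or.inl t5⟩, ⟨hγ1, hγ2, ?_, Or.inl t6⟩⟩ <;>
  · intro h
    rw [Multiset.ext] at h
    have h3 := h (a'+3)
    have h1 := h 1
    simp only [alphaP, betaP, gamma1P, gamma2P, e1, e2, e3, e4, e5,
      Multiset.count_cons, Multiset.count_add, Multiset.count_replicate] at h3 h1
    split_ifs at h3 h1 <;> omega
end
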